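/- For every natural number n ≥ 1, every monomial k^α·b^β·X^γ·Y^δ occurring in the support of F n satisfies: γ is even, δ = 2^n − γ, and β = 2^{n−1} − γ/2. (That is, F n has the form ∑_{i=0}^{2^{n−1}} c_i·X^{2i}·Y^{2^n − 2i}·b^{2^{n−1} − i} with c_i ∈ ℤ[k].) -/

import Mathlib

/-!
Give `k, b, X, Y` the weights `(0, 0), (0, -2), (1, 0), (1, 1)` in `ℤ × ℤ`, so that a monomial
`k^α b^β X^γ Y^δ` has weight `(γ + δ, δ - 2β)`. Since `k` has weight `0` and `b` exactly cancels the
extra `(0, 2)` of `G²` over `F²`, the recursion keeps `Fₙ` and `Gₙ` weighted homogeneous of weights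
`(2ⁿ, 0)` and `(2ⁿ, 1)`; the seed `(X, Y)` of weights `(1, 0), (1, 1)` produces `(F₁, G₁)`.
For a monomial of `Fₙ` this says `γ + δ = 2ⁿ` and `δ = 2β`.
-/

open MvPolynomial

/-- The pair `(Fₙ, Gₙ)` in `ℤ[k, b, X, Y]` (variables `0 ↦ k`, `1 ↦ b`, `2 ↦ X`, `3 ↦ Y`),
defined by `F 1 = k (X² + b Y²)`, `G 1 = X Y`,
`F (n+1) = k ((F n)² + b (G n)²)`, `G (n+1) = (F n) (G n)`. -/
noncomputable def FG : ℕ → MvPolynomial (Fin 4) ℤ × MvPolynomial (Fin 4) ℤ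
  | 0 => (0, 0)
  | 1 => (X 0 * (X 2 ^ 2 + X 1 * X 3 ^ 2), X 2 * X 3)
  | n + 2 =>
      (X 0 * ((FG (n + 1)).1 ^ 2 + X 1 * (FG (n + 1)).2 ^ 2),
        (FG (n + 1)).1 * (FG (n + 1)).2)

noncomputable def F (n : ℕ) : MvPolynomial (Fin 4) ℤ := (FG n).1
noncomputable def G (n : ℕ) : MvPolynomial (Fin 4) ℤ := (FG n).2

def kbXYWeight : Fin 4 → ℤ × ℤ := ![(0, 0), (0, -2), (1, 0), (1, 1)]

lemma weight_kbXYWeight (m : Fin 4 →₀ ℕ) :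
    Finsupp.weight kbXYWeight m = ((m 2 + m 3 : ℤ), (m 3 : ℤ) - 2 * m 1) := by
  simp [Finsupp.weight_apply, Finsupp.sum_fintype, Fin.sum_univ_four, kbXYWeight, Prod.ext_iff,
    sub_eq_neg_add, mul_comm]

lemma F_one : F 1 = X 0 * (X 2 ^ 2 + X 1 * X 3 ^ 2) := rfl

lemma G_one : G 1 = X 2 * X 3 := rfl

lemma F_succ {n : ℕ} (hn : 1 ≤ n) : F (n + 1) = X 0 * (F n ^ 2 + X 1 * G n ^ 2) := by
  obtain ⟨n, rfl⟩ := Nat.exists_eq_add_of_le' hn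
  rfl

lemma G_succ {n : ℕ} (hn : 1 ≤ n) : G (n + 1) = F n * G n := by
  obtain ⟨n, rfl⟩ := Nat.exists_eq_add_of_le' hn
  rfl

lemma isWeightedHomogeneous_kbXYWeight_step {f g : MvPolynomial (Fin 4) ℤ} {d : ℤ}
    (hf : IsWeightedHomogeneous kbXYWeight f (d, 0))
    (hg : IsWeightedHomogeneous kbXYWeight g (d, 1)) :
    IsWeightedHomogeneous kbXYWeight (X 0 * (f ^ 2 + X 1 * g ^ 2)) (2 * d, 0) ∧
      IsWeightedHomogeneous kbXYWeight (f * g) (2 * d, 1) := by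
  have hX := isWeightedHomogeneous_X ℤ kbXYWeight
  have hf2 : IsWeightedHomogeneous kbXYWeight (f ^ 2) (2 * d, 0) := by
    simpa [two_mul] using hf.pow 2
  have hbg2 : IsWeightedHomogeneous kbXYWeight (X 1 * g ^ 2) (2 * d, 0) := by
    simpa [kbXYWeight, two_mul] using (hX 1).mul (hg.pow 2)
  exact ⟨by simpa [kbXYWeight] using (hX 0).mul (hf2.add hbg2),
    by simpa [two_mul] using hf.mul hg⟩

lemma isWeightedHomogeneous_F_G {n : ℕ} (hn : 1 ≤ n) :
    IsWeightedHomogeneous kbXYWeight (F n) (2 ^ n, 0) ∧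
      IsWeightedHomogeneous kbXYWeight (G n) (2 ^ n, 1) := by
  induction n, hn using Nat.le_induction with
  | base =>
    have hX := isWeightedHomogeneous_X ℤ kbXYWeight
    simpa [F_one, G_one] using isWeightedHomogeneous_kbXYWeight_step (hX 2) (hX 3)
  | succ n hn ih =>
    rw [F_succ hn, G_succ hn, pow_succ' (2 : ℤ)]
    exact isWeightedHomogeneous_kbXYWeight_step ih.1 ih.2

/-- Every monomial `k^α b^β X^γ Y^δ` in the support of `F n` has `γ` even,
`δ = 2^n - γ` and `β = 2^(n-1) - γ/2`. -/
theorem support_F_form (n : ℕ) (hn : 1 ≤ n) :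
    ∀ m ∈ (F n).support,
      Even (m 2) ∧ m 3 = 2 ^ n - m 2 ∧ m 1 = 2 ^ (n - 1) - m 2 / 2 := by
  intro m hm
  have hw := (isWeightedHomogeneous_F_G hn).1 (mem_support_iff.mp hm)
  rw [weight_kbXYWeight, Prod.mk.injEq] at hw
  obtain ⟨hdeg, hbal⟩ := hw
  have hXY : m 2 + m 3 = 2 ^ n := by exact_mod_cast hdeg
  have hYb : m 3 = 2 * m 1 := by omega
  have hpow : 2 ^ n = 2 * 2 ^ (n - 1) := by
    rw [← pow_succ', Nat.sub_add_cancel hn]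
  exact ⟨⟨2 ^ (n - 1) - m 1, by omega⟩, by omega, by omega⟩
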